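/- arXiv:1002.4321 — 2 statements merged into one kernel-verified Lean document; each statement's English description precedes it below -/
import Mathlib

section
/- Let L be a free ℤ-module of finite rank, r ≥ 1 an integer, and let b, b' : L → L → ℤ be symmetric bilinear forms, each of which is primitive (no integer n > 1 divides all the values b(x,y), respectively b'(x,y)) and each of which takes a positive value on the diagonal (there exist α, α' ∈ L with b(α,α) > 0 and b'(α',α') > 0). Suppose f, f' are positive rational numbers such that f·(b(α,α))^r = f'·(b'(α,α))^r for every α ∈ L. Then f = f', and b' = b or b' = −b; moreover if r is odd, then b' = b. -/
private lemma fujiki_aux_den_dvd (q : ℚ) (m k : ℤ) (h : q * (m : ℚ) = (k : ℚ)) :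
    (q.den : ℤ) ∣ m := by
  have h1 : (q.num : ℚ) * m = k * q.den := by
    rw [← Rat.num_div_den q] at h
    field_simp at h
    linarith
  have h2 : q.num * m = k * q.den := by exact_mod_cast h1
  have h3 : (q.den : ℤ) ∣ q.num * m := ⟨k, by linarith⟩
  have h4 : Nat.Coprime q.num.natAbs q.den := q.reduced
  have h5 : q.den ∣ (q.num * m).natAbs := Int.natAbs_dvd_natAbs.mpr (by simpa using h3)
  rw [Int.natAbs_mul] at h5
  have h6 : q.den ∣ m.natAbs := Nat.Coprime.dvd_of_dvd_mul_left (Nat.Coprime.symm h4) h5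
  exact Int.natAbs_dvd_natAbs.mp (by simpa using h6)

private lemma fujiki_aux_pm (a c : ℚ) (r : ℕ) (hr : r ≠ 0) (h : a ^ r = c ^ r) :
    a = c ∨ a = -c := by
  have : |a| = |c| := by
    refine (pow_left_inj₀ (abs_nonneg a) (abs_nonneg c) hr).mp ?_
    rw [← abs_pow, ← abs_pow, h]
  exact abs_eq_abs.mp this

/-- The Fujiki relation `∫_X α^{2r} = f_X · q(α)^r` determines the Fujiki constant and the
Beauville–Bogomolov form: if `b, b'` are primitive symmetric bilinear forms on a finite free
`ℤ`-module, each taking a positive value on the diagonal, and `f, f'` are positive rationals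
with `f · b(α,α)^r = f' · b'(α,α)^r` for all `α`, then `f = f'` and `b' = ±b`; moreover
`b' = b` when `r` is odd. -/
theorem fujiki_relation_determines_form_and_constant
    (L : Type*) [AddCommGroup L] [Module ℤ L] [Module.Free ℤ L] [Module.Finite ℤ L]
    (r : ℕ) (hr : 1 ≤ r)
    (b b' : L →ₗ[ℤ] L →ₗ[ℤ] ℤ)
    (hsymm : ∀ x y : L, b x y = b y x)
    (hsymm' : ∀ x y : L, b' x y = b' y x)
    (hprim : ∀ n : ℤ, 1 < n → ¬ (∀ x y : L, n ∣ b x y))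
    (hprim' : ∀ n : ℤ, 1 < n → ¬ (∀ x y : L, n ∣ b' x y))
    (hpos : ∃ α : L, 0 < b α α)
    (hpos' : ∃ α : L, 0 < b' α α)
    (f f' : ℚ) (hf : 0 < f) (hf' : 0 < f')
    (heq : ∀ α : L, f * (b α α : ℚ) ^ r = f' * (b' α α : ℚ) ^ r) :
    f = f' ∧ (b' = b ∨ b' = -b) ∧ (Odd r → b' = b) := by
  obtain ⟨α₀, hα₀⟩ := hpos
  have hrne : r ≠ 0 := by omega
  have hu : (0 : ℚ) < (b α₀ α₀ : ℚ) := by exact_mod_cast hα₀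
  have h0 := heq α₀
  have hu'ne : ((b' α₀ α₀ : ℤ) : ℚ) ≠ 0 := by
    intro h
    rw [h, zero_pow hrne, mul_zero] at h0
    have : (0:ℚ) < f * ((b α₀ α₀ : ℤ) : ℚ) ^ r := mul_pos hf (pow_pos hu r)
    linarith
  obtain ⟨l, hl_def⟩ : ∃ l : ℚ, l = ((b' α₀ α₀ : ℤ) : ℚ) / ((b α₀ α₀ : ℤ) : ℚ) := ⟨_, rfl⟩
  have hlne : l ≠ 0 := by rw [hl_def]; exact div_ne_zero hu'ne hu.ne'
  have hlu : l * ((b α₀ α₀ : ℤ) : ℚ) = ((b' α₀ α₀ : ℤ) : ℚ) := by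
    rw [hl_def]; exact div_mul_cancel₀ _ hu.ne'
  have hlr : f' * l ^ r = f := by
    have hup : (0:ℚ) < ((b α₀ α₀ : ℤ) : ℚ) ^ r := pow_pos hu r
    rw [hl_def, div_pow, mul_div_assoc', div_eq_iff (pow_ne_zero _ hu.ne')]
    linarith [h0]
  -- key identity
  have key : ∀ x : L, ((b' x x : ℤ) : ℚ) ^ r = (l * ((b x x : ℤ) : ℚ)) ^ r := by
    intro x
    have h1 := heq x
    rw [← hlr] at h1
    have h2 : f' * (((b' x x : ℤ) : ℚ) ^ r) = f' * ((l * ((b x x : ℤ) : ℚ)) ^ r) := by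
      rw [mul_pow]; ring_nf; ring_nf at h1; linarith
    exact mul_left_cancel₀ hf'.ne' h2
  -- pointwise equality of quadratic forms (up to the factor l)
  have qeq : ∀ x : L, ((b' x x : ℤ) : ℚ) = l * ((b x x : ℤ) : ℚ) := by
    intro x
    by_contra hx
    have hsign := fujiki_aux_pm _ _ r hrne (key x)
    have hv' : ((b' x x : ℤ) : ℚ) = -(l * ((b x x : ℤ) : ℚ)) := hsign.resolve_left hx
    have hm : l * ((b x x : ℤ) : ℚ) ≠ 0 := by
      intro h
      exact hx (by rw [hv', h, neg_zero])
    have hn : l * ((b α₀ α₀ : ℤ) : ℚ) ≠ 0 := by rw [hlu]; exact hu'ne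
    -- the three-point argument
    have hcase : ∀ t : ℤ, 0 < t →
        (((b' α₀ x : ℤ) : ℚ) - l * ((b α₀ x : ℤ) : ℚ) = t * (l * ((b x x : ℤ) : ℚ))) ∨
        (l * ((b α₀ α₀ : ℤ) : ℚ) + t * (((b' α₀ x : ℤ) : ℚ) + l * ((b α₀ x : ℤ) : ℚ)) = 0) := by
      intro t ht
      have hQint : b (α₀ + t • x) (α₀ + t • x)
          = b α₀ α₀ + 2 * t * (b α₀ x) + t ^ 2 * (b x x) := by
        simp [map_add, map_smul, smul_eq_mul, hsymm x α₀]
        ring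
      have hQ'int : b' (α₀ + t • x) (α₀ + t • x)
          = b' α₀ α₀ + 2 * t * (b' α₀ x) + t ^ 2 * (b' x x) := by
        simp [map_add, map_smul, smul_eq_mul, hsymm' x α₀]
        ring
      have hQ : ((b (α₀ + t • x) (α₀ + t • x) : ℤ) : ℚ)
          = ((b α₀ α₀ : ℤ) : ℚ) + 2 * t * ((b α₀ x : ℤ) : ℚ) + (t:ℚ) ^ 2 * ((b x x : ℤ) : ℚ) := by
        exact_mod_cast congrArg (fun z : ℤ => (z : ℚ)) hQint
      have hQ' : ((b' (α₀ + t • x) (α₀ + t • x) : ℤ) : ℚ)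
          = ((b' α₀ α₀ : ℤ) : ℚ) + 2 * t * ((b' α₀ x : ℤ) : ℚ) + (t:ℚ) ^ 2 * ((b' x x : ℤ) : ℚ) := by
        exact_mod_cast congrArg (fun z : ℤ => (z : ℚ)) hQ'int
      have ht' : (t : ℚ) ≠ 0 := Int.cast_ne_zero.mpr (by omega)
      rcases fujiki_aux_pm _ _ r hrne (key (α₀ + t • x)) with hA | hB
      · left
        rw [hQ, hQ'] at hA
        have h3 : (t:ℚ) * ((((b' α₀ x : ℤ) : ℚ) - l * ((b α₀ x : ℤ) : ℚ))
            - (t:ℚ) * (l * ((b x x : ℤ) : ℚ))) = 0 := by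
          linear_combination hA / 2 + hlu / 2 - (t:ℚ)^2 / 2 * hv'
        have h4 := mul_eq_zero.mp h3
        rcases h4 with h4 | h4
        · exact absurd h4 ht'
        · linarith
      · right
        rw [hQ, hQ'] at hB
        have h3 : (t:ℚ) * ((l * ((b α₀ α₀ : ℤ) : ℚ)
            + (t:ℚ) * (((b' α₀ x : ℤ) : ℚ) + l * ((b α₀ x : ℤ) : ℚ))) - 0) = 0 := by
          linear_combination (t:ℚ) / 2 * hB + (t:ℚ) / 2 * hlu - (t:ℚ)^3 / 2 * hv'
        rcases mul_eq_zero.mp h3 with h4 | h4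
        · exact absurd h4 ht'
        · linarith
    have c1 := hcase 1 one_pos
    have c2 := hcase 2 (by norm_num)
    have c3 := hcase 3 (by norm_num)
    push_cast at c1 c2 c3
    rcases c1 with c1 | c1 <;> rcases c2 with c2 | c2 <;> rcases c3 with c3 | c3 <;>
      first
        | exact hm (by linarith)
        | exact hn (by linarith)
  -- polarization: equality of bilinear forms
  have beq : ∀ x y : L, ((b' x y : ℤ) : ℚ) = l * ((b x y : ℤ) : ℚ) := by
    intro x y
    have e1 := qeq (x + y)
    have e2 := qeq x
    have e3 := qeq y
    have eZ : b (x + y) (x + y) = b x x + 2 * (b x y) + b y y := by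
      simp [map_add, hsymm y x]; ring
    have e'Z : b' (x + y) (x + y) = b' x x + 2 * (b' x y) + b' y y := by
      simp [map_add, hsymm' y x]; ring
    rw [eZ, e'Z] at e1
    push_cast at e1
    linear_combination e1 / 2 - e2 / 2 - e3 / 2
  -- primitivity forces l = ±1
  have hdenpos : 0 < l.den := l.pos
  have hden : l.den = 1 := by
    by_contra hd
    have h1 : (1 : ℤ) < (l.den : ℤ) := by exact_mod_cast (by omega : 1 < l.den)
    exact hprim (l.den : ℤ) h1 (fun x y => fujiki_aux_den_dvd l _ _ (beq x y).symm)
  have hlint : l = (l.num : ℚ) := by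
    conv_lhs => rw [← Rat.num_div_den l]
    rw [hden]; simp
  have hnum_ne : l.num ≠ 0 := Rat.num_ne_zero.mpr hlne
  have beqZ : ∀ x y : L, b' x y = l.num * b x y := by
    intro x y
    have h := beq x y
    rw [hlint] at h
    exact_mod_cast h
  have hnum1 : l.num = 1 ∨ l.num = -1 := by
    by_contra hcon
    push_neg at hcon
    have h1 : 1 < l.num.natAbs := by omega
    have h2 : (1 : ℤ) < (l.num.natAbs : ℤ) := by exact_mod_cast h1
    exact hprim' (l.num.natAbs : ℤ) h2
      (fun x y => Int.natAbs_dvd.mpr ⟨b x y, beqZ x y⟩)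
  rcases hnum1 with h1 | h1
  · have hl1 : l = 1 := by rw [hlint, h1]; norm_num
    have hb : b' = b := by
      ext x y
      have := beqZ x y
      rw [h1] at this
      simpa using this
    refine ⟨?_, Or.inl hb, fun _ => hb⟩
    rw [hl1, one_pow, mul_one] at hlr
    exact hlr.symm
  · have hl1 : l = -1 := by rw [hlint, h1]; norm_num
    have hb : b' = -b := by
      ext x y
      have := beqZ x y
      rw [h1] at this
      simpa using this
    have hOdd : Odd r → False := by
      intro ho
      rw [hl1, ho.neg_one_pow] at hlr
      linarith
    have hfeq : f = f' := by
      rcases Nat.even_or_odd r with he | ho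
      · rw [hl1, he.neg_one_pow, mul_one] at hlr
        exact hlr.symm
      · exact (hOdd ho).elim
    exact ⟨hfeq, Or.inr hb, fun ho => (hOdd ho).elim⟩
end

section
/- Let V be a finite-dimensional vector space over ℚ, let r ≥ 1 be an integer, let Q and Q' be quadratic forms on V with Q ≠ 0, and let c be a nonzero rational number such that Q(v)^r = c·Q'(v)^r for all v ∈ V. Then there exists a rational number λ such that Q' = λ·Q (and necessarily c·λ^r = 1). -/
/-!
Fix `v₀` with `Q v₀ ≠ 0` and put `l = Q' v₀ / Q v₀`, so that `c * l ^ r = 1`. Then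
`Q' v ^ r = (l * Q v) ^ r` for every `v`, so over the ordered field `ℚ` the two quadratic forms
`Q' - l • Q` and `Q' + l • Q` have pointwise product zero. Restricted to a line `t ↦ u + t • w`
a quadratic form is a polynomial of degree at most two in `t`, and a nonzero polynomial over an
infinite domain has a non-root, so one of the two forms vanishes. In either case `Q' = l • Q`.
-/

open Polynomial

lemma sub_mul_add_eq_zero_of_pow_eq_pow {α : Type*} [Ring α] [LinearOrder α]
    [IsStrictOrderedRing α] {a b : α} {n : ℕ} (hn : n ≠ 0) (h : a ^ n = b ^ n) :
    (a - b) * (a + b) = 0 := by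
  rcases (pow_eq_pow_iff_of_ne_zero hn).1 h with rfl | ⟨rfl, -⟩ <;> simp

namespace QuadraticMap

variable {R V : Type*} [CommRing R] [AddCommGroup V] [Module R V]

noncomputable def linePoly (Q : QuadraticForm R V) (u w : V) : R[X] :=
  C (Q u) + C (polar Q u w) * X + C (Q w) * X ^ 2

variable (Q : QuadraticForm R V) (u w : V)

@[simp]
lemma eval_linePoly (t : R) : (Q.linePoly u w).eval t = Q (u + t • w) := by
  rw [QuadraticMap.map_add Q u, QuadraticMap.map_smul, polar_smul_right, linePoly]
  simp only [eval_add, eval_mul, eval_C, eval_X, eval_pow, smul_eq_mul]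
  ring

lemma coeff_linePoly_zero : (Q.linePoly u w).coeff 0 = Q u := by
  simp [linePoly]

lemma coeff_linePoly_two : (Q.linePoly u w).coeff 2 = Q w := by
  simp [linePoly]

lemma linePoly_ne_zero_of_left (hu : Q u ≠ 0) : Q.linePoly u w ≠ 0 :=
  fun h ↦ hu (by rw [← coeff_linePoly_zero, h, coeff_zero])

lemma linePoly_ne_zero_of_right (hw : Q w ≠ 0) : Q.linePoly u w ≠ 0 :=
  fun h ↦ hw (by rw [← coeff_linePoly_two Q u, h, coeff_zero])

theorem eq_zero_or_eq_zero_of_forall_mul_eq_zero [IsDomain R] [Infinite R]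
    {P Q : QuadraticForm R V} (h : ∀ v, P v * Q v = 0) : P = 0 ∨ Q = 0 := by
  by_contra! hPQ
  obtain ⟨u, hu⟩ : ∃ u, P u ≠ 0 := DFunLike.ne_iff.1 hPQ.1
  obtain ⟨w, hw⟩ : ∃ w, Q w ≠ 0 := DFunLike.ne_iff.1 hPQ.2
  have hprod : P.linePoly u w * Q.linePoly u w = 0 :=
    Polynomial.funext fun t ↦ by simp [h]
  exact mul_ne_zero (P.linePoly_ne_zero_of_left u w hu) (Q.linePoly_ne_zero_of_right u w hw) hprod

end QuadraticMap

theorem quadraticForm_proportional_of_pow_eq_general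
    (V : Type*) [AddCommGroup V] [Module ℚ V]
    (r : ℕ) (hr : 1 ≤ r) (Q Q' : QuadraticForm ℚ V) (hQ : Q ≠ 0)
    (c : ℚ) (h : ∀ v : V, Q v ^ r = c * Q' v ^ r) :
    ∃ l : ℚ, Q' = l • Q ∧ c * l ^ r = 1 := by
  obtain ⟨v₀, hv₀⟩ : ∃ v, Q v ≠ 0 := DFunLike.ne_iff.1 hQ
  set l := Q' v₀ / Q v₀ with hl
  have hcl : c * l ^ r = 1 := by
    rw [hl, div_pow, ← mul_div_assoc, ← h v₀, div_self (pow_ne_zero r hv₀)]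
  have hpow (v : V) : Q' v ^ r = (l * Q v) ^ r := by
    rw [mul_pow, h v, ← mul_assoc, mul_comm _ c, hcl, one_mul]
  have hprod (v : V) : (Q' - l • Q) v * (Q' + l • Q) v = 0 :=
    sub_mul_add_eq_zero_of_pow_eq_pow (by omega) (hpow v)
  refine ⟨l, ?_, hcl⟩
  rcases QuadraticMap.eq_zero_or_eq_zero_of_forall_mul_eq_zero hprod with hsub | hadd
  · exact sub_eq_zero.1 hsub
  · -- as `Q' v₀ = l * Q v₀`, evaluating at `v₀` gives `2 * l * Q v₀ = 0`
    have hadd₀ : Q' v₀ + l * Q v₀ = 0 := by simpa using congrArg (· v₀) hadd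
    have hl0 : l = 0 := by
      have : l * Q v₀ = 0 := by linarith [div_mul_cancel₀ (Q' v₀) hv₀]
      exact (mul_eq_zero.1 this).resolve_right hv₀
    rw [hl0, zero_smul, add_zero] at hadd
    rw [hadd, hl0, zero_smul]

/-- Two quadratic forms over `ℚ` whose `r`-th powers agree as functions up to a nonzero
constant must be proportional: if `Q v ^ r = c * Q' v ^ r` for all `v`, with `Q ≠ 0` and
`c ≠ 0`, then `Q' = λ • Q` for some rational `λ`, and necessarily `c * λ ^ r = 1`. -/
theorem quadraticForm_proportional_of_pow_eq
    (V : Type*) [AddCommGroup V] [Module ℚ V] [FiniteDimensional ℚ V]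
    (r : ℕ) (hr : 1 ≤ r) (Q Q' : QuadraticForm ℚ V) (hQ : Q ≠ 0)
    (c : ℚ) (hc : c ≠ 0) (h : ∀ v : V, Q v ^ r = c * Q' v ^ r) :
    ∃ l : ℚ, Q' = l • Q ∧ c * l ^ r = 1 :=
  quadraticForm_proportional_of_pow_eq_general V r hr Q Q' hQ c h
end
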